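/- Let ψ be the impulsive semiflow of a regular impulsive dynamical system (X,φ,D,I). Then ĥ_s(ψ) = ĥ_s(ψ|_{X_ξ}), i.e., the modified separated-set entropy of ψ on X equals that of its restriction to the forward-invariant set X_ξ. -/

import Mathlib

open Set Filter
open scoped ENNReal NNReal Classical Real


open Set Filter

variable {α : Type*}

/-- A (not necessarily continuous) semiflow on `α`, parameterized by nonnegative real times. -/
def IsSemiflow (φ : ℝ → α → α) : Prop :=
  (∀ x, φ 0 x = x) ∧ ∀ s t : ℝ, 0 ≤ s → 0 ≤ t → ∀ x, φ (s + t) x = φ s (φ t x)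

/-- A continuous semiflow. -/
def IsContSemiflow [TopologicalSpace α] (φ : ℝ → α → α) : Prop :=
  IsSemiflow φ ∧ ContinuousOn (fun p : ℝ × α => φ p.1 p.2) (Set.Ici 0 ×ˢ Set.univ)

/-- The pseudosemimetric `d_δ^φ(x,y) = inf { d(φ_s x, φ_s y) : s ∈ [0,δ) }`. -/
noncomputable def dDelta (d : α → α → ℝ) (φ : ℝ → α → α) (δ : ℝ) (x y : α) : ℝ :=
  sInf ((fun s => d (φ s x) (φ s y)) '' Set.Ico 0 δ)

/-- The modified dynamical ball `B̂(x,φ,T,ε,δ)`. -/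
def ballHat (d : α → α → ℝ) (φ : ℝ → α → α) (T ε δ : ℝ) (x : α) : Set α :=
  {y | ∀ t ∈ Set.Icc (0:ℝ) T, dDelta d φ δ (φ t x) (φ t y) < ε}

/-- The classical Bowen dynamical ball `B(x,φ,T,ε)`. -/
def ballB (d : α → α → ℝ) (φ : ℝ → α → α) (T ε : ℝ) (x : α) : Set α :=
  {y | ∀ t ∈ Set.Icc (0:ℝ) T, d (φ t x) (φ t y) < ε}

/-- `(φ,T,ε,δ)`-separated set. -/
def sepHat (d : α → α → ℝ) (φ : ℝ → α → α) (T ε δ : ℝ) (E : Set α) : Prop :=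
  ∀ x ∈ E, E ∩ ballHat d φ T ε δ x = {x}

/-- `(φ,T,ε,δ)`-spanning set for the subset `S`. -/
def spanHat (d : α → α → ℝ) (φ : ℝ → α → α) (S : Set α) (T ε δ : ℝ) (F : Set α) : Prop :=
  F ⊆ S ∧ S ⊆ ⋃ y ∈ F, ballHat d φ T ε δ y

/-- Classical `(φ,T,ε)`-separated set. -/
def sepB (d : α → α → ℝ) (φ : ℝ → α → α) (T ε : ℝ) (E : Set α) : Prop :=
  ∀ x ∈ E, E ∩ ballB d φ T ε x = {x}

/-- Classical `(φ,T,ε)`-spanning set for the subset `S`. -/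
def spanB (d : α → α → ℝ) (φ : ℝ → α → α) (S : Set α) (T ε : ℝ) (F : Set α) : Prop :=
  F ⊆ S ∧ S ⊆ ⋃ y ∈ F, ballB d φ T ε y

/-- `ŝ(φ,T,ε,δ)`: sup of cardinalities of separated subsets of `S`. -/
noncomputable def sHat (d : α → α → ℝ) (φ : ℝ → α → α) (S : Set α) (T ε δ : ℝ) : ℕ∞ :=
  ⨆ (E : Set α) (_ : E ⊆ S ∧ sepHat d φ T ε δ E), E.encard

/-- `r̂(φ,T,ε,δ)`: inf of cardinalities of spanning sets. -/
noncomputable def rHat (d : α → α → ℝ) (φ : ℝ → α → α) (S : Set α) (T ε δ : ℝ) : ℕ∞ :=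
  ⨅ (F : Set α) (_ : spanHat d φ S T ε δ F), F.encard

noncomputable def sB (d : α → α → ℝ) (φ : ℝ → α → α) (S : Set α) (T ε : ℝ) : ℕ∞ :=
  ⨆ (E : Set α) (_ : E ⊆ S ∧ sepB d φ T ε E), E.encard

noncomputable def rB (d : α → α → ℝ) (φ : ℝ → α → α) (S : Set α) (T ε : ℝ) : ℕ∞ :=
  ⨅ (F : Set α) (_ : spanB d φ S T ε F), F.encard

/-- Extended logarithm on `ℕ∞`, with `log ∞ = ∞` and `log 0 = -∞`. -/
noncomputable def elog (x : ℕ∞) : EReal :=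
  if x = ⊤ then ⊤ else if x = 0 then ⊥ else ((Real.log (x.toNat : ℝ) : ℝ) : EReal)

/-- Exponential growth rate `limsup_{T→∞} (1/T) log f(T)`. -/
noncomputable def rate (f : ℝ → ℕ∞) : EReal :=
  Filter.limsup (fun T : ℝ => ((T⁻¹ : ℝ) : EReal) * elog (f T)) Filter.atTop

/-- The modified separated-set entropy `ĥ_s(φ)` (on the subset `S`); since the quantities are
monotone in `ε` and `δ`, the limits `ε → 0⁺`, `δ → 0⁺` are suprema. -/
noncomputable def hHatS (d : α → α → ℝ) (φ : ℝ → α → α) (S : Set α) : EReal :=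
  ⨆ (δ : ℝ) (_ : 0 < δ) (ε : ℝ) (_ : 0 < ε), rate (fun T => sHat d φ S T ε δ)

/-- The modified spanning-set entropy `ĥ_r(φ)`. -/
noncomputable def hHatR (d : α → α → ℝ) (φ : ℝ → α → α) (S : Set α) : EReal :=
  ⨆ (δ : ℝ) (_ : 0 < δ) (ε : ℝ) (_ : 0 < ε), rate (fun T => rHat d φ S T ε δ)

/-- Bowen's classical separated-set entropy `h_s(φ)`. -/
noncomputable def hSB (d : α → α → ℝ) (φ : ℝ → α → α) (S : Set α) : EReal :=
  ⨆ (ε : ℝ) (_ : 0 < ε), rate (fun T => sB d φ S T ε)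

/-- Bowen's classical spanning-set entropy `h_r(φ)`. -/
noncomputable def hRB (d : α → α → ℝ) (φ : ℝ → α → α) (S : Set α) : EReal :=
  ⨆ (ε : ℝ) (_ : 0 < ε), rate (fun T => rB d φ S T ε)
variable {α : Type*}

/-- First impulse time `τ₁(x) = inf { t > 0 : φ_t(x) ∈ D }` (`∞` if the orbit never meets `D`). -/
noncomputable def tau1 [MetricSpace α] (φ : ℝ → α → α) (D : Set α) (x : α) : ℝ≥0∞ :=
  sInf (ENNReal.ofReal '' {t : ℝ | 0 < t ∧ φ t x ∈ D})

/-- The successive impulse points `x⁰ = x`, `x¹ = φ_{τ₁(x)}(x)`,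
`x^{n+1} = φ_{τ₁(I(xⁿ))}(I(xⁿ))`. -/
noncomputable def impSeq [MetricSpace α] (φ : ℝ → α → α) (D : Set α) (I : α → α) (x : α) :
    ℕ → α
  | 0 => x
  | n + 1 =>
      let y := if n = 0 then x else I (impSeq φ D I x n)
      φ (tau1 φ D y).toReal y

/-- The successive impulse times `τ_0 = 0`, `τ_{n+1}(x) = τ_n(x) + τ₁(I(xⁿ))`
(with `τ_1(x) = τ₁(x)`). -/
noncomputable def impTime [MetricSpace α] (φ : ℝ → α → α) (D : Set α) (I : α → α) (x : α) :
    ℕ → ℝ≥0∞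
  | 0 => 0
  | n + 1 => impTime φ D I x n + tau1 φ D (if n = 0 then x else I (impSeq φ D I x n))

/-- `(X,φ,D,I)` is an impulsive dynamical system: `φ` is a continuous semiflow, `D` a proper
closed subset, `I` continuous on `D`, every first impulse time is positive, and the total
impulse time is infinite. -/
def IsIDS [MetricSpace α] (φ : ℝ → α → α) (D : Set α) (I : α → α) : Prop :=
  ((∀ x, φ 0 x = x) ∧ ∀ s t : ℝ, 0 ≤ s → 0 ≤ t → ∀ x, φ (s + t) x = φ s (φ t x)) ∧
  ContinuousOn (fun p : ℝ × α => φ p.1 p.2) (Set.Ici 0 ×ˢ Set.univ) ∧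
  IsClosed D ∧ D ≠ Set.univ ∧ ContinuousOn I D ∧
  (∀ x, 0 < tau1 φ D x) ∧ (∀ x, (⨆ n, impTime φ D I x n) = ⊤)

/-- The tube `D_η = ⋃_{x ∈ D} { φ_t(x) : 0 < t < η }`. -/
def tube (φ : ℝ → α → α) (D : Set α) (η : ℝ) : Set α :=
  ⋃ x ∈ D, (fun t => φ t x) '' Set.Ioo 0 η

/-- `X_η = X \ (D ∪ D_η)`. -/
def Xtube (φ : ℝ → α → α) (D : Set α) (η : ℝ) : Set α :=
  (D ∪ tube φ D η)ᶜ

/-- `ψ` is the impulsive semiflow associated to `(X,φ,D,I)`: it agrees with the impulsive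
drift `γ_x` on each interval between consecutive impulse times. -/
def IsImpulsive [MetricSpace α] (φ : ℝ → α → α) (D : Set α) (I : α → α)
    (ψ : ℝ → α → α) : Prop :=
  ∀ x : α,
    (∀ t : ℝ, 0 ≤ t → ENNReal.ofReal t < impTime φ D I x 1 → ψ t x = φ t x) ∧
    (∀ n : ℕ, 1 ≤ n → ∀ t : ℝ, impTime φ D I x n ≤ ENNReal.ofReal t →
      ENNReal.ofReal t < impTime φ D I x (n + 1) →
      ψ t x = φ (t - (impTime φ D I x n).toReal) (I (impSeq φ D I x n)))

/-- A regular impulsive dynamical system, with the constants `η, ξ` of the definition. -/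
def IsRegularIDS [MetricSpace α] (φ : ℝ → α → α) (D : Set α) (I : α → α) (η ξ : ℝ) : Prop :=
  IsIDS φ D I ∧ (I '' D) ∩ D = ∅ ∧ (∃ K : NNReal, LipschitzOnWith K I D) ∧
  0 < ξ ∧ ξ < η / 4 ∧ IsOpen (tube φ D ξ) ∧
  ((fun x => φ ξ x) '' tube φ D ξ ⊆ Xtube φ D ξ) ∧
  (∀ x ∈ I '' D, ∀ t : ℝ, 0 < t → t ≤ ξ → φ t x ∉ I '' D)

/-- `τ*`: equal to `τ₁` off `D` and to `0` on `D`. -/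
noncomputable def tauStar [MetricSpace α] (φ : ℝ → α → α) (D : Set α) (x : α) : ℝ≥0∞ :=
  if x ∈ D then 0 else tau1 φ D x

/-- The relation identifying `x` with `I x` for `x ∈ D`. -/
def IRel (D : Set α) (I : α → α) (x y : α) : Prop :=
  x = y ∨ (x ∈ D ∧ y = I x) ∨ (y ∈ D ∧ x = I y) ∨ (x ∈ D ∧ y ∈ D ∧ I x = I y)

/-- The chain pseudometric on the quotient by `IRel`:
`d̃(x̃,ỹ) = inf { Σ d(pᵢ,qᵢ) }` over chains `p₀ ∈ x̃`, `q_n ∈ ỹ`, `qᵢ ∼ p_{i+1}`. -/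
noncomputable def chainDist (d : α → α → ℝ) (D : Set α) (I : α → α) (x y : α) : ℝ :=
  sInf {r : ℝ | ∃ (n : ℕ) (p q : ℕ → α), IRel D I x (p 0) ∧ IRel D I (q n) y ∧
    (∀ i < n, IRel D I (q i) (p (i + 1))) ∧
    r = ∑ i ∈ Finset.range (n + 1), d (p i) (q i)}






section Stmt17Aux

set_option linter.unusedSectionVars false

open Set Filter

variable {α : Type*} [MetricSpace α]

/-! ### Basic counting/entropy lemmas -/

lemma elog_mono' : Monotone elog := by
  intro x y hxy
  unfold elog
  rcases eq_or_ne y ⊤ with rfl | hy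
  · simp
  · have hx : x ≠ ⊤ := fun h => hy (top_le_iff.mp (h ▸ hxy))
    rw [if_neg hx, if_neg hy]
    rcases eq_or_ne x 0 with rfl | hx0
    · simp [bot_le]
    · have hy0 : y ≠ 0 := by
        rintro rfl; exact hx0 (le_antisymm hxy bot_le)
      rw [if_neg hx0, if_neg hy0]
      have h1 : 1 ≤ x.toNat := Nat.one_le_iff_ne_zero.mpr (by
        simp only [ne_eq, ENat.toNat_eq_zero]; tauto)
      have h2 : x.toNat ≤ y.toNat := ENat.toNat_le_toNat hxy hy
      exact_mod_cast Real.log_le_log (by exact_mod_cast h1) (by exact_mod_cast h2)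

lemma sHat_mono_S' (d : α → α → ℝ) (φ : ℝ → α → α) {S S' : Set α} (h : S ⊆ S')
    (T ε δ : ℝ) : sHat d φ S T ε δ ≤ sHat d φ S' T ε δ := by
  refine iSup_le fun E => iSup_le fun hE => ?_
  exact le_iSup₂ (f := fun (E : Set α) (_ : E ⊆ S' ∧ sepHat d φ T ε δ E) => E.encard)
    E ⟨hE.1.trans h, hE.2⟩

lemma rate_mono' {f g : ℝ → ℕ∞} (h : ∀ T, f T ≤ g T) : rate f ≤ rate g := by
  refine Filter.limsup_le_limsup ?_
  filter_upwards [Filter.eventually_ge_atTop (1:ℝ)] with T hT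
  have hnn : (0:EReal) ≤ ((T⁻¹ : ℝ) : EReal) := by
    have : (0:ℝ) ≤ T⁻¹ := inv_nonneg.mpr (le_trans zero_le_one hT)
    exact_mod_cast this
  exact mul_le_mul_of_nonneg_left (elog_mono' (h T)) hnn

lemma hHatS_mono_S' (d : α → α → ℝ) (φ : ℝ → α → α) {S S' : Set α} (h : S ⊆ S') :
    hHatS d φ S ≤ hHatS d φ S' := by
  refine iSup₂_mono fun δ hδ => iSup₂_mono fun ε hε => ?_
  exact rate_mono' fun T => sHat_mono_S' d φ h T ε δ

lemma elog_mul_le' (M : ℕ) (hM : 1 ≤ M) (m : ℕ∞) :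
    elog ((M : ℕ∞) * m) ≤ ((Real.log M : ℝ) : EReal) + elog m := by
  induction m using ENat.recTopCoe with
  | top =>
      have hMt : (M : ℕ∞) * ⊤ = ⊤ := by
        rw [ENat.mul_top]
        exact_mod_cast Nat.one_le_iff_ne_zero.mp hM
      rw [hMt]
      unfold elog
      simp only [if_true]
      rw [EReal.coe_add_top]
  | coe k =>
      rcases Nat.eq_zero_or_pos k with rfl | hk
      · simp only [Nat.cast_zero, mul_zero]
        unfold elog
        norm_num
      · have hcast : (M : ℕ∞) * (k : ℕ∞) = ((M * k : ℕ) : ℕ∞) := by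
          exact_mod_cast rfl
        rw [hcast]
        unfold elog
        have h1 : ((M * k : ℕ) : ℕ∞) ≠ ⊤ := by exact_mod_cast WithTop.coe_ne_top
        have h2 : ((M * k : ℕ) : ℕ∞) ≠ 0 := by
          simp only [ne_eq, Nat.cast_eq_zero, Nat.mul_eq_zero, not_or]
          omega
        have h3 : ((k : ℕ) : ℕ∞) ≠ ⊤ := by exact_mod_cast WithTop.coe_ne_top
        have h4 : ((k : ℕ) : ℕ∞) ≠ 0 := by
          simp only [ne_eq, Nat.cast_eq_zero]; omega
        rw [if_neg h1, if_neg h2, if_neg h3, if_neg h4]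
        have ht1 : (((M * k : ℕ) : ℕ∞)).toNat = M * k := rfl
        have ht2 : (((k : ℕ) : ℕ∞)).toNat = k := rfl
        rw [ht1, ht2]
        rw [← EReal.coe_add]
        apply EReal.coe_le_coe_iff.mpr
        rw [Nat.cast_mul, Real.log_mul (by positivity) (by positivity)]

lemma ereal_mul_add_le' {r c : ℝ} (hr : 0 ≤ r) (b : EReal) :
    (r : EReal) * ((c : EReal) + b) ≤ (r : EReal) * c + (r : EReal) * b := by
  induction b with
  | bot =>
      rw [EReal.add_bot]
      rcases eq_or_lt_of_le hr with h | h
      · rw [← h]; simp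
      · rw [EReal.mul_bot_of_pos (by exact_mod_cast h)]
        exact bot_le
  | coe b =>
      rw [← EReal.coe_add, ← EReal.coe_mul, ← EReal.coe_mul, ← EReal.coe_mul, ← EReal.coe_add]
      apply EReal.coe_le_coe_iff.mpr
      ring_nf
      exact le_refl _
  | top =>
      rw [EReal.coe_add_top]
      rcases eq_or_lt_of_le hr with h | h
      · rw [← h]; simp
      · rw [EReal.mul_top_of_pos (by exact_mod_cast h)]
        rw [← EReal.coe_mul, EReal.coe_add_top]

lemma rate_mul_const_le' {f g : ℝ → ℕ∞} (M : ℕ) (hM : 1 ≤ M)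
    (h : ∀ T, f T ≤ (M : ℕ∞) * g T) : rate f ≤ rate g := by
  set c := Real.log M with hc_def
  have hc : 0 ≤ c := Real.log_nonneg (by exact_mod_cast hM)
  set u : ℝ → EReal := fun T => ((T⁻¹ * c : ℝ) : EReal) with hu_def
  set v : ℝ → EReal := fun T => ((T⁻¹ : ℝ) : EReal) * elog (g T) with hv_def
  have hptw : ∀ᶠ T in Filter.atTop,
      ((T⁻¹ : ℝ) : EReal) * elog (f T) ≤ (u + v) T := by
    filter_upwards [Filter.eventually_ge_atTop (1:ℝ)] with T hT
    have hr : (0:ℝ) ≤ T⁻¹ := inv_nonneg.mpr (by linarith)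
    have hr' : (0:EReal) ≤ ((T⁻¹ : ℝ) : EReal) := by exact_mod_cast hr
    calc ((T⁻¹ : ℝ) : EReal) * elog (f T)
        ≤ ((T⁻¹ : ℝ) : EReal) * elog ((M : ℕ∞) * g T) :=
          mul_le_mul_of_nonneg_left (elog_mono' (h T)) hr'
      _ ≤ ((T⁻¹ : ℝ) : EReal) * (((c : ℝ) : EReal) + elog (g T)) :=
          mul_le_mul_of_nonneg_left (elog_mul_le' M hM (g T)) hr'
      _ ≤ ((T⁻¹ : ℝ) : EReal) * ((c : ℝ) : EReal) + ((T⁻¹ : ℝ) : EReal) * elog (g T) :=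
          ereal_mul_add_le' hr _
      _ = (u + v) T := by
          simp only [Pi.add_apply, hu_def, hv_def, ← EReal.coe_mul]
  have hlim1 : rate f ≤ Filter.limsup (u + v) Filter.atTop :=
    Filter.limsup_le_limsup hptw
  have hu : Filter.Tendsto u Filter.atTop (nhds (0 : EReal)) := by
    have h1 : Filter.Tendsto (fun T : ℝ => T⁻¹ * c) Filter.atTop (nhds (0 * c)) :=
      tendsto_inv_atTop_zero.mul_const c
    rw [zero_mul] at h1
    have h2 := EReal.tendsto_coe.mpr h1
    simpa [hu_def] using h2
  have huls : Filter.limsup u Filter.atTop = 0 := hu.limsup_eq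
  have h2 : Filter.limsup (u + v) Filter.atTop ≤
      Filter.limsup u Filter.atTop + Filter.limsup v Filter.atTop := by
    apply EReal.limsup_add_le
    · left; rw [huls]; simp
    · left; rw [huls]; simp
  rw [huls, zero_add] at h2
  exact le_trans hlim1 h2

/-! ### dDelta / separation lemmas -/

lemma dDelta_self' {ψ : ℝ → α → α} {δ : ℝ} (hδ : 0 < δ) (a : α) :
    dDelta dist ψ δ a a = 0 := by
  unfold dDelta
  have : (fun s => dist (ψ s a) (ψ s a)) '' Set.Ico 0 δ = {0} := by
    apply Set.Subset.antisymm
    · rintro r ⟨s, _, rfl⟩; simp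
    · rintro r hr
      rw [Set.mem_singleton_iff] at hr
      exact ⟨0, ⟨le_refl 0, hδ⟩, by simp [hr]⟩
  rw [this, csInf_singleton]

lemma dDelta_le' {ψ : ℝ → α → α} {δ : ℝ} (hδ : 0 < δ) (a b : α) {s : ℝ}
    (h0 : 0 ≤ s) (h1 : s < δ) :
    dDelta dist ψ δ a b ≤ dist (ψ s a) (ψ s b) := by
  apply csInf_le
  · exact ⟨0, by rintro r ⟨u, _, rfl⟩; exact dist_nonneg⟩
  · exact ⟨s, ⟨h0, h1⟩, rfl⟩

lemma mem_ballHat_self' {ψ : ℝ → α → α} {T ε δ : ℝ} (hε : 0 < ε) (hδ : 0 < δ) (x : α) :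
    x ∈ ballHat dist ψ T ε δ x := by
  intro t _
  rw [dDelta_self' hδ]
  exact hε

lemma sep_witness' {ψ : ℝ → α → α} {T ε δ : ℝ} {E : Set α}
    (hsep : sepHat dist ψ T ε δ E) {x y : α}
    (hx : x ∈ E) (hy : y ∈ E) (hne : y ≠ x) :
    ∃ t, t ∈ Set.Icc (0:ℝ) T ∧ ε ≤ dDelta dist ψ δ (ψ t x) (ψ t y) := by
  have hnb : y ∉ ballHat dist ψ T ε δ x := by
    intro hb
    have : y ∈ E ∩ ballHat dist ψ T ε δ x := ⟨hy, hb⟩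
    rw [hsep x hx] at this
    exact hne this
  simp only [ballHat, Set.mem_setOf_eq] at hnb
  push_neg at hnb
  obtain ⟨t, ht, hge⟩ := hnb
  exact ⟨t, ht, hge⟩

lemma encard_le_sHat' {ψ : ℝ → α → α} {T ε δ : ℝ} {E S : Set α}
    (hES : E ⊆ S) (hsep : sepHat dist ψ T ε δ E) :
    E.encard ≤ sHat dist ψ S T ε δ :=
  le_iSup₂ (f := fun (E : Set α) (_ : E ⊆ S ∧ sepHat dist ψ T ε δ E) => E.encard) E ⟨hES, hsep⟩

lemma sepHat_subset' {d : α → α → ℝ} {φ : ℝ → α → α} {T ε δ : ℝ} {E E' : Set α}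
    (hE : sepHat d φ T ε δ E) (h : E' ⊆ E) : sepHat d φ T ε δ E' := by
  intro x hx
  apply Set.Subset.antisymm
  · exact (Set.inter_subset_inter_left _ h).trans (le_of_eq (hE x (h hx)))
  · intro y hy
    rw [Set.mem_singleton_iff] at hy
    subst hy
    have hx' : y ∈ E ∩ ballHat d φ T ε δ y := (hE y (h hx)) ▸ rfl
    exact ⟨hx, hx'.2⟩

lemma encard_biUnion_le' {ι : Type*} (s : Finset ι) (f : ι → Set α) :
    (⋃ i ∈ s, f i).encard ≤ ∑ i ∈ s, (f i).encard := by
  classical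
  induction s using Finset.induction_on with
  | empty => simp
  | insert _ _ hne ih =>
      rename_i a s _
      rw [Finset.set_biUnion_insert, Finset.sum_insert hne]
      exact (Set.encard_union_le _ _).trans (add_le_add_right ih _)

/-! ### Geometry of the collar -/

section Geometry
variable {φ : ℝ → α → α} {D : Set α} {ξ : ℝ}
variable (hadd : ∀ s t : ℝ, 0 ≤ s → 0 ≤ t → ∀ x, φ (s + t) x = φ s (φ t x))
variable (hξ : 0 < ξ)
variable (hflow : (fun x => φ ξ x) '' tube φ D ξ ⊆ Xtube φ D ξ)

lemma mem_tube_of' {z : α} (hz : z ∈ D) {t : ℝ} (h0 : 0 < t) (h1 : t < ξ) :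
    φ t z ∈ tube φ D ξ :=
  Set.mem_iUnion₂.mpr ⟨z, hz, ⟨t, ⟨h0, h1⟩, rfl⟩⟩

lemma tube_disjoint_Xtube' {p : α} (hp : p ∈ tube φ D ξ) : p ∉ Xtube φ D ξ :=
  fun hq => hq (Or.inr hp)

lemma D_disjoint_Xtube' {p : α} (hp : p ∈ D) : p ∉ Xtube φ D ξ :=
  fun hq => hq (Or.inl hp)

lemma orbit_continuousOn' (hcont : ContinuousOn (fun p : ℝ × α => φ p.1 p.2)
    (Set.Ici 0 ×ˢ Set.univ)) (x : α) :
    ContinuousOn (fun t : ℝ => φ t x) (Set.Ici 0) :=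
  hcont.comp ((continuous_id.prodMk continuous_const).continuousOn)
    (fun t ht => ⟨ht, Set.mem_univ x⟩)

include hadd hξ hflow in
lemma no_return_D' {z : α} (hz : z ∈ D) {t : ℝ} (h0 : 0 < t) (h1 : t ≤ ξ) :
    φ t z ∉ D := by
  intro hmem
  have hw0 : 0 < t / 2 := by linarith
  have hw1 : t / 2 < ξ := by linarith
  have hP1 : φ (ξ + t / 2) z ∈ Xtube φ D ξ := by
    have h := hadd ξ (t / 2) (le_of_lt hξ) (le_of_lt hw0) z
    rw [h]
    exact hflow ⟨φ (t / 2) z, mem_tube_of' hz hw0 hw1, rfl⟩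
  have hP2 : φ (ξ + t / 2) z ∈ tube φ D ξ := by
    have h := hadd (ξ - t / 2) t (by linarith) (le_of_lt h0) z
    have he : ξ - t / 2 + t = ξ + t / 2 := by ring
    rw [he] at h
    rw [h]
    exact mem_tube_of' hmem (by linarith) (by linarith)
  exact tube_disjoint_Xtube' hP2 hP1

include hadd hξ hflow in
lemma no_return_tube' {x : α} (hx : x ∈ tube φ D ξ) {t : ℝ} (h0 : 0 < t) (h1 : t ≤ ξ) :
    φ t x ∉ D := by
  rcases Set.mem_iUnion₂.mp hx with ⟨z, hz, u, ⟨hu0, hu1⟩, rfl⟩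
  have hphi : φ t (φ u z) = φ (t + u) z := (hadd t u (le_of_lt h0) (le_of_lt hu0) z).symm
  rw [hphi]
  rcases le_or_gt (t + u) ξ with hle | hgt
  · exact no_return_D' hadd hξ hflow hz (by linarith) hle
  · intro hmem
    have hs0 : 0 < t + u - ξ := by linarith
    have hs1 : t + u - ξ < ξ := by linarith
    have h := hadd ξ (t + u - ξ) (le_of_lt hξ) (le_of_lt hs0) z
    have he : ξ + (t + u - ξ) = t + u := by ring
    rw [he] at h
    rw [h] at hmem
    exact D_disjoint_Xtube' hmem
      (hflow ⟨φ (t + u - ξ) z, mem_tube_of' hz hs0 hs1, rfl⟩)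

include hadd hξ hflow in
lemma no_return_collar' {x : α} (hx : x ∈ D ∪ tube φ D ξ) {t : ℝ} (h0 : 0 < t) (h1 : t ≤ ξ) :
    φ t x ∉ D := by
  rcases hx with hx | hx
  · exact no_return_D' hadd hξ hflow hx h0 h1
  · exact no_return_tube' hadd hξ hflow hx h0 h1

include hadd hξ hflow in
lemma phi_xi_mem_Xtube'
    (hcont : ContinuousOn (fun p : ℝ × α => φ p.1 p.2) (Set.Ici 0 ×ˢ Set.univ))
    (hopen : IsOpen (tube φ D ξ)) {x : α} (hx : x ∈ D ∪ tube φ D ξ) :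
    φ ξ x ∈ Xtube φ D ξ := by
  rcases hx with hx | hx
  · have hnotD : φ ξ x ∉ D := no_return_D' hadd hξ hflow hx hξ le_rfl
    have hnotTube : φ ξ x ∉ tube φ D ξ := by
      intro hmem
      have hc : ContinuousWithinAt (fun t : ℝ => φ t x) (Set.Ici 0) ξ :=
        orbit_continuousOn' hcont x ξ (le_of_lt hξ)
      have hev : ∀ᶠ t in nhdsWithin ξ (Set.Ici 0), φ t x ∈ tube φ D ξ :=
        hc.eventually_mem (hopen.mem_nhds hmem)
      have hmono : nhdsWithin ξ (Set.Ioi ξ) ≤ nhdsWithin ξ (Set.Ici 0) :=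
        nhdsWithin_mono ξ (fun t ht => le_of_lt (lt_trans hξ ht))
      have hev2 : ∀ᶠ t in nhdsWithin ξ (Set.Ioi ξ), φ t x ∈ tube φ D ξ := hev.filter_mono hmono
      have hev3 : ∀ᶠ t in nhdsWithin ξ (Set.Ioi ξ), t < 2 * ξ := by
        apply eventually_nhdsWithin_of_eventually_nhds
        have : Set.Iio (2 * ξ) ∈ nhds ξ := Iio_mem_nhds (by linarith)
        exact eventually_of_mem this (fun t ht => ht)
      have hev4 : ∀ᶠ t in nhdsWithin ξ (Set.Ioi ξ), t ∈ Set.Ioi ξ := self_mem_nhdsWithin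
      rcases ((hev2.and hev3).and hev4).exists with ⟨t, ⟨htube, hlt⟩, hgt⟩
      have hs0 : 0 < t - ξ := by simpa using hgt
      have hs1 : t - ξ < ξ := by linarith
      have h := hadd ξ (t - ξ) (le_of_lt hξ) (le_of_lt hs0) x
      have he : ξ + (t - ξ) = t := by ring
      rw [he] at h
      rw [h] at htube
      exact tube_disjoint_Xtube' htube
        (hflow ⟨φ (t - ξ) x, mem_tube_of' hx hs0 hs1, rfl⟩)
    intro hmem
    rcases hmem with h | h
    · exact hnotD h
    · exact hnotTube h
  · exact hflow ⟨x, hx, rfl⟩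

end Geometry

/-! ### tau1 lemmas -/

section TauLemmas
variable {φ : ℝ → α → α} {D : Set α} {x : α}

lemma tau1_le' {t : ℝ} (h0 : 0 < t) (hD : φ t x ∈ D) : tau1 φ D x ≤ ENNReal.ofReal t :=
  sInf_le ⟨t, ⟨h0, hD⟩, rfl⟩

lemma tau1_attained'
    (hcont : ContinuousOn (fun p : ℝ × α => φ p.1 p.2) (Set.Ici 0 ×ˢ Set.univ))
    (hD : IsClosed D) (hpos : 0 < tau1 φ D x) (hfin : tau1 φ D x ≠ ⊤) :
    0 < (tau1 φ D x).toReal ∧ φ ((tau1 φ D x).toReal) x ∈ D := by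
  set A := {t : ℝ | 0 < t ∧ φ t x ∈ D} with hA
  have hne : A.Nonempty := by
    by_contra h
    rw [Set.not_nonempty_iff_eq_empty] at h
    apply hfin
    rw [tau1, hA] at *
    rw [h]
    simp
  have hbdd : BddBelow A := ⟨0, fun t ht => le_of_lt ht.1⟩
  have hnn : 0 ≤ sInf A := le_csInf hne (fun t ht => le_of_lt ht.1)
  have heq : tau1 φ D x = ENNReal.ofReal (sInf A) := by
    apply le_antisymm
    · refine ENNReal.le_of_forall_pos_le_add (fun ε hε _ => ?_)
      have hlt : sInf A < sInf A + (ε:ℝ) := by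
        have : (0:ℝ) < (ε:ℝ) := hε
        linarith
      obtain ⟨t, htA, htlt⟩ := exists_lt_of_csInf_lt hne hlt
      calc tau1 φ D x ≤ ENNReal.ofReal t := tau1_le' htA.1 htA.2
        _ ≤ ENNReal.ofReal (sInf A + ε) := ENNReal.ofReal_le_ofReal (le_of_lt htlt)
        _ ≤ ENNReal.ofReal (sInf A) + ENNReal.ofReal ε := ENNReal.ofReal_add_le
        _ = ENNReal.ofReal (sInf A) + ε := by
            rw [ENNReal.ofReal_coe_nnreal]
    · refine le_sInf (fun b hb => ?_)
      rcases hb with ⟨t, htA, rfl⟩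
      exact ENNReal.ofReal_le_ofReal (csInf_le hbdd htA)
  have htr : (tau1 φ D x).toReal = sInf A := by
    rw [heq, ENNReal.toReal_ofReal hnn]
  have horb : ContinuousOn (fun t : ℝ => φ t x) (Set.Ici 0) :=
    hcont.comp ((continuous_id.prodMk continuous_const).continuousOn)
      (fun t ht => ⟨ht, Set.mem_univ x⟩)
  have hclosed : IsClosed (Set.Ici 0 ∩ (fun t : ℝ => φ t x) ⁻¹' D) :=
    horb.preimage_isClosed_of_isClosed isClosed_Ici hD
  have hsub : A ⊆ Set.Ici 0 ∩ (fun t : ℝ => φ t x) ⁻¹' D :=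
    fun t ht => ⟨le_of_lt ht.1, ht.2⟩
  have hmem : sInf A ∈ Set.Ici 0 ∩ (fun t : ℝ => φ t x) ⁻¹' D := by
    have h1 : sInf A ∈ closure A := csInf_mem_closure hne hbdd
    have h2 : closure A ⊆ Set.Ici 0 ∩ (fun t : ℝ => φ t x) ⁻¹' D :=
      hclosed.closure_subset_iff.mpr hsub
    exact h2 h1
  constructor
  · rw [htr]
    rcases lt_or_eq_of_le hnn with h | h
    · exact h
    · exfalso
      have : tau1 φ D x = 0 := by rw [heq, ← h, ENNReal.ofReal_zero]
      rw [this] at hpos; exact lt_irrefl _ hpos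
  · rw [htr]; exact hmem.2

end TauLemmas

/-! ### shift lemmas for the impulsive semiflow -/

section ShiftLemmas
variable {φ : ℝ → α → α} {D : Set α} {I : α → α} {ψ : ℝ → α → α} {ξ : ℝ} {x : α}

lemma impSeq_succ' (x : α) (n : ℕ) : impSeq φ D I x (n+1) =
    φ (tau1 φ D (if n = 0 then x else I (impSeq φ D I x n))).toReal
      (if n = 0 then x else I (impSeq φ D I x n)) := rfl

lemma impTime_succ' (x : α) (n : ℕ) : impTime φ D I x (n+1) =
    impTime φ D I x n + tau1 φ D (if n = 0 then x else I (impSeq φ D I x n)) := rfl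

lemma impTime_one' (x : α) : impTime φ D I x 1 = tau1 φ D x := by
  rw [impTime_succ']
  simp [impTime]

variable (hadd : ∀ s t : ℝ, 0 ≤ s → 0 ≤ t → ∀ x, φ (s + t) x = φ s (φ t x))
variable (hξ : 0 < ξ)
variable (hcollar : ∀ t : ℝ, 0 < t → t ≤ ξ → φ t x ∉ D)
variable (hcol_tau : ENNReal.ofReal ξ < tau1 φ D x)

include hadd hξ hcollar in
lemma tau1_shift' : tau1 φ D (φ ξ x) + ENNReal.ofReal ξ = tau1 φ D x := by
  set y := φ ξ x with hy
  have hphi : ∀ t : ℝ, 0 ≤ t → φ t y = φ (t + ξ) x := fun t ht => by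
    rw [hy, ← hadd t ξ ht (le_of_lt hξ)]
  apply le_antisymm
  · refine le_sInf (fun b hb => ?_)
    rcases hb with ⟨t, ⟨ht0, htD⟩, rfl⟩
    have htξ : ξ < t := by
      by_contra h
      exact hcollar t ht0 (not_lt.mp h) htD
    have h1 : t - ξ ∈ {s : ℝ | 0 < s ∧ φ s y ∈ D} := by
      constructor
      · linarith
      · rw [hphi (t - ξ) (by linarith), sub_add_cancel]
        exact htD
    have h2 : tau1 φ D y ≤ ENNReal.ofReal (t - ξ) := sInf_le ⟨t - ξ, h1, rfl⟩
    calc tau1 φ D y + ENNReal.ofReal ξ ≤ ENNReal.ofReal (t - ξ) + ENNReal.ofReal ξ :=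
          add_le_add_left h2 _
      _ = ENNReal.ofReal t := by
          rw [← ENNReal.ofReal_add (by linarith) (le_of_lt hξ)]
          congr 1; ring
  · rcases eq_or_ne (tau1 φ D y) ⊤ with htop | hfin
    · rw [htop, top_add]; exact le_top
    · refine ENNReal.le_of_forall_pos_le_add (fun ε hε _ => ?_)
      have hlt : tau1 φ D y < tau1 φ D y + ε :=
        ENNReal.lt_add_right hfin (by exact_mod_cast hε.ne')
      rcases sInf_lt_iff.mp hlt with ⟨b, hb, hblt⟩
      rcases hb with ⟨t, ⟨ht0, htD⟩, rfl⟩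
      have hmem : 0 < t + ξ ∧ φ (t + ξ) x ∈ D := by
        refine ⟨by linarith, ?_⟩
        rw [← hphi t (le_of_lt ht0)]; exact htD
      calc tau1 φ D x ≤ ENNReal.ofReal (t + ξ) := sInf_le ⟨t + ξ, hmem, rfl⟩
        _ = ENNReal.ofReal t + ENNReal.ofReal ξ :=
            ENNReal.ofReal_add (le_of_lt ht0) (le_of_lt hξ)
        _ ≤ (tau1 φ D y + ε) + ENNReal.ofReal ξ := add_le_add_left (le_of_lt hblt) _
        _ = tau1 φ D y + ENNReal.ofReal ξ + ε := by ring

include hadd hξ hcollar in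
lemma tau1_shift_toReal' (hfin : tau1 φ D x ≠ ⊤) :
    (tau1 φ D (φ ξ x)).toReal = (tau1 φ D x).toReal - ξ := by
  have heq := tau1_shift' hadd hξ hcollar
  have hfin' : tau1 φ D (φ ξ x) ≠ ⊤ := by
    intro h
    rw [h, top_add] at heq
    exact hfin heq.symm
  have : (tau1 φ D (φ ξ x)).toReal + ξ = (tau1 φ D x).toReal := by
    rw [← heq, ENNReal.toReal_add hfin' ENNReal.ofReal_ne_top,
      ENNReal.toReal_ofReal (le_of_lt hξ)]
  linarith

include hadd hξ hcollar hcol_tau in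
lemma impSeq_impTime_shift' (hfin : tau1 φ D x ≠ ⊤) :
    ∀ n : ℕ, 1 ≤ n → impSeq φ D I (φ ξ x) n = impSeq φ D I x n ∧
      impTime φ D I (φ ξ x) n + ENNReal.ofReal ξ = impTime φ D I x n := by
  set y := φ ξ x with hy
  have htau := tau1_shift' hadd hξ hcollar
  have htoReal := tau1_shift_toReal' hadd hξ hcollar hfin
  have hξτ : ξ ≤ (tau1 φ D x).toReal := by
    have := (ENNReal.ofReal_lt_iff_lt_toReal (le_of_lt hξ) hfin).mp hcol_tau
    linarith
  intro n hn
  induction n with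
  | zero => omega
  | succ m ih =>
    rcases Nat.eq_or_lt_of_le hn with h1 | h2
    · have hm : m = 0 := by omega
      subst hm
      constructor
      · rw [impSeq_succ', impSeq_succ']
        simp only [if_true]
        rw [htoReal]
        have : φ ((tau1 φ D x).toReal - ξ) y = φ (((tau1 φ D x).toReal - ξ) + ξ) x := by
          rw [hy, ← hadd _ ξ (by linarith) (le_of_lt hξ)]
        rw [this, sub_add_cancel]
      · rw [impTime_one', impTime_one', htau]
    · have hm : 1 ≤ m := by omega
      obtain ⟨hseq, htime⟩ := ih hm
      have hmne : m ≠ 0 := by omega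
      constructor
      · rw [impSeq_succ', impSeq_succ', if_neg hmne, if_neg hmne, hseq]
      · rw [impTime_succ', impTime_succ', if_neg hmne, if_neg hmne, hseq,
          add_right_comm, htime]

include hadd hξ hcollar hcol_tau in
lemma psi_shift' (hψ : IsImpulsive φ D I ψ)
    (htop : ∀ z, (⨆ n, impTime φ D I z n) = ⊤)
    {t : ℝ} (ht : 0 ≤ t) :
    ψ (t + ξ) x = ψ t (φ ξ x) := by
  set y := φ ξ x with hy
  have hphi : ∀ s : ℝ, 0 ≤ s → φ s y = φ (s + ξ) x := fun s hs => by
    rw [hy, ← hadd s ξ hs (le_of_lt hξ)]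
  have htau := tau1_shift' hadd hξ hcollar
  rcases eq_or_ne (tau1 φ D x) ⊤ with htopx | hfin
  · have htopy : tau1 φ D y = ⊤ := by
      by_contra h
      have : tau1 φ D y + ENNReal.ofReal ξ ≠ ⊤ :=
        ENNReal.add_ne_top.mpr ⟨h, ENNReal.ofReal_ne_top⟩
      rw [htau] at this
      exact this htopx
    have h1 := ((hψ y).1 t ht (by rw [impTime_one', htopy]; exact ENNReal.ofReal_lt_top))
    have h2 := ((hψ x).1 (t + ξ) (by linarith)
      (by rw [impTime_one', htopx]; exact ENNReal.ofReal_lt_top))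
    rw [h1, h2, hphi t ht]
  · rcases lt_or_ge (ENNReal.ofReal t) (tau1 φ D y) with hcase | hcase
    · have h1 := (hψ y).1 t ht (by rwa [impTime_one'])
      have h2 : ENNReal.ofReal (t + ξ) < tau1 φ D x := by
        rw [← htau, ENNReal.ofReal_add ht (le_of_lt hξ)]
        exact (ENNReal.add_lt_add_iff_right ENNReal.ofReal_ne_top).mpr hcase
      have h3 := (hψ x).1 (t + ξ) (by linarith) (by rwa [impTime_one'])
      rw [h1, h3, hphi t ht]
    · have hfiny : tau1 φ D y ≠ ⊤ := ne_top_of_le_ne_top ENNReal.ofReal_ne_top hcase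
      have hex : ∃ m, ENNReal.ofReal t < impTime φ D I y m := by
        have h := htop y
        have : ENNReal.ofReal t < ⨆ n, impTime φ D I y n := by
          rw [h]; exact ENNReal.ofReal_lt_top
        exact lt_iSup_iff.mp this
      classical
      set k := Nat.find hex with hk
      have hkspec : ENNReal.ofReal t < impTime φ D I y k := Nat.find_spec hex
      have hk0 : k ≠ 0 := by
        intro h
        rw [h] at hkspec
        simp [impTime] at hkspec
      have hk1 : k ≠ 1 := by
        intro h
        rw [h, impTime_one'] at hkspec
        exact absurd hcase (not_le.mpr hkspec)
      have hk2 : 2 ≤ k := by omega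
      set n := k - 1 with hn
      have hkn : k = n + 1 := by omega
      have hn1 : 1 ≤ n := by omega
      have hnle : impTime φ D I y n ≤ ENNReal.ofReal t := by
        have := Nat.find_min hex (m := n) (by omega)
        exact not_lt.mp this
      have hnlt : ENNReal.ofReal t < impTime φ D I y (n + 1) := by
        rw [← hkn]; exact hkspec
      obtain ⟨hseq, htime⟩ := impSeq_impTime_shift' hadd hξ hcollar hcol_tau hfin n hn1
      obtain ⟨hseq', htime'⟩ := impSeq_impTime_shift' hadd hξ hcollar hcol_tau hfin (n+1)
        (by omega)
      have hfinn : impTime φ D I y n ≠ ⊤ := ne_top_of_le_ne_top ENNReal.ofReal_ne_top hnle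
      have h1 := (hψ y).2 n hn1 t hnle hnlt
      have hxle : impTime φ D I x n ≤ ENNReal.ofReal (t + ξ) := by
        rw [← htime, ENNReal.ofReal_add ht (le_of_lt hξ)]
        exact add_le_add_left hnle _
      have hxlt : ENNReal.ofReal (t + ξ) < impTime φ D I x (n + 1) := by
        rw [← htime', ENNReal.ofReal_add ht (le_of_lt hξ)]
        exact (ENNReal.add_lt_add_iff_right ENNReal.ofReal_ne_top).mpr hnlt
      have h2 := (hψ x).2 n hn1 (t + ξ) hxle hxlt
      rw [h1, h2, hseq]
      congr 1
      rw [← htime, ENNReal.toReal_add hfinn ENNReal.ofReal_ne_top,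
        ENNReal.toReal_ofReal (le_of_lt hξ)]
      ring

end ShiftLemmas

/-! ### uniform continuity -/

lemma exists_uc' [CompactSpace α] {φ : ℝ → α → α} {ξ : ℝ}
    (hcont : ContinuousOn (fun p : ℝ × α => φ p.1 p.2) (Set.Ici 0 ×ˢ Set.univ))
    (hξ : 0 < ξ) {ε : ℝ} (hε : 0 < ε) :
    ∃ ε₁ > 0, ∀ a b : α, dist a b < ε₁ → ∀ t ∈ Set.Icc 0 ξ, dist (φ t a) (φ t b) < ε := by
  have hK : IsCompact (Set.Icc (0:ℝ) ξ ×ˢ (Set.univ : Set α)) :=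
    (isCompact_Icc).prod isCompact_univ
  have hsub : Set.Icc (0:ℝ) ξ ×ˢ (Set.univ : Set α) ⊆ Set.Ici 0 ×ˢ Set.univ := by
    rintro ⟨t, a⟩ ⟨ht, _⟩
    exact ⟨ht.1, Set.mem_univ a⟩
  have huc : UniformContinuousOn (fun p : ℝ × α => φ p.1 p.2)
      (Set.Icc (0:ℝ) ξ ×ˢ (Set.univ : Set α)) :=
    hK.uniformContinuousOn_of_continuous (hcont.mono hsub)
  rw [Metric.uniformContinuousOn_iff] at huc
  obtain ⟨ε₁, hε₁, h⟩ := huc ε hε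
  refine ⟨ε₁, hε₁, fun a b hab t ht => ?_⟩
  have := h (t, a) ⟨ht, Set.mem_univ a⟩ (t, b) ⟨ht, Set.mem_univ b⟩ (by
    rw [Prod.dist_eq]
    simp only [dist_self]
    rw [max_eq_right dist_nonneg]
    exact hab)
  exact this

end Stmt17Aux


section Stmt17Main

set_option linter.unusedSectionVars false

open Set Filter

lemma stmt17_main_count {X : Type*} [MetricSpace X] [CompactSpace X]
    (φ : ℝ → X → X) (D : Set X) (I : X → X) (ψ : ℝ → X → X) (ξ : ℝ)
    (hφ0 : ∀ x, φ 0 x = x)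
    (hadd : ∀ s t : ℝ, 0 ≤ s → 0 ≤ t → ∀ x, φ (s + t) x = φ s (φ t x))
    (hcont : ContinuousOn (fun p : ℝ × X => φ p.1 p.2) (Set.Ici 0 ×ˢ Set.univ))
    (hDcl : IsClosed D)
    (htaupos : ∀ x, 0 < tau1 φ D x)
    (htop : ∀ x, (⨆ n, impTime φ D I x n) = ⊤)
    (hξ : 0 < ξ)
    (hopen : IsOpen (tube φ D ξ))
    (hflow : (fun x => φ ξ x) '' tube φ D ξ ⊆ Xtube φ D ξ)
    (hψ : IsImpulsive φ D I ψ)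
    {ε δ : ℝ} (hε : 0 < ε) (hδ : 0 < δ) :
    ∃ M : ℕ, 1 ≤ M ∧ ∀ T, sHat dist ψ Set.univ T ε δ ≤
      (M : ℕ∞) * sHat dist ψ (Xtube φ D ξ) T ε δ := by
  classical
  obtain ⟨ε₁, hε₁, huc⟩ := exists_uc' hcont hξ hε
  obtain ⟨C, hCs, hCfin, hCcov⟩ :=
    finite_cover_balls_of_compact (isCompact_univ (X := X)) (half_pos hε₁)
  set F := hCfin.toFinset with hF
  refine ⟨F.card + 1, by omega, fun T => ?_⟩
  -- derived dynamical facts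
  have hcol_tau : ∀ x ∈ D ∪ tube φ D ξ, ENNReal.ofReal ξ < tau1 φ D x := by
    intro x hx
    by_contra h
    push_neg at h
    have hfin : tau1 φ D x ≠ ⊤ := ne_top_of_le_ne_top ENNReal.ofReal_ne_top h
    obtain ⟨hpos', hmem⟩ := tau1_attained' hcont hDcl (htaupos x) hfin
    have hrle : (tau1 φ D x).toReal ≤ ξ := by
      have h2 := ENNReal.toReal_mono ENNReal.ofReal_ne_top h
      rwa [ENNReal.toReal_ofReal (le_of_lt hξ)] at h2
    exact no_return_collar' hadd hξ hflow hx hpos' hrle hmem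
  have hpsi0 : ∀ z : X, ψ 0 z = z := by
    intro z
    have h := (hψ z).1 0 le_rfl (by
      rw [impTime_one', ENNReal.ofReal_zero]; exact htaupos z)
    rw [h, hφ0]
  have hpsi_phi : ∀ x ∈ D ∪ tube φ D ξ, ∀ t : ℝ, 0 ≤ t → t ≤ ξ → ψ t x = φ t x := by
    intro x hx t ht0 htξ
    exact (hψ x).1 t ht0 (by
      rw [impTime_one']
      exact lt_of_le_of_lt (ENNReal.ofReal_le_ofReal htξ) (hcol_tau x hx))
  refine iSup_le fun E => iSup_le fun hE => ?_
  obtain ⟨hEuniv, hEsep⟩ := hE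
  -- transport of a small collar piece
  have hpiece : ∀ c : X,
      ((E ∩ (D ∪ tube φ D ξ)) ∩ Metric.ball c (ε₁ / 2)).encard ≤
        sHat dist ψ (Xtube φ D ξ) T ε δ := by
    intro c
    set A := (E ∩ (D ∪ tube φ D ξ)) ∩ Metric.ball c (ε₁ / 2) with hA
    have key : ∀ x ∈ A, ∀ y ∈ A, y ≠ x → ∃ t', 0 ≤ t' ∧ t' ≤ T ∧
        ε ≤ dDelta dist ψ δ (ψ t' (φ ξ x)) (ψ t' (φ ξ y)) := by
      intro x hx y hy hne
      obtain ⟨t0, ht0, hwit⟩ := sep_witness' hEsep hx.1.1 hy.1.1 hne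
      have hxcol : x ∈ D ∪ tube φ D ξ := hx.1.2
      have hycol : y ∈ D ∪ tube φ D ξ := hy.1.2
      have ht0gt : ξ < t0 := by
        by_contra hle
        push_neg at hle
        have h1 : ψ t0 x = φ t0 x := hpsi_phi x hxcol t0 ht0.1 hle
        have h2 : ψ t0 y = φ t0 y := hpsi_phi y hycol t0 ht0.1 hle
        have hd : dist x y < ε₁ := by
          have hxc : dist x c < ε₁ / 2 := Metric.mem_ball.mp hx.2
          have hyc : dist y c < ε₁ / 2 := Metric.mem_ball.mp hy.2
          have h3 : dist x y ≤ dist x c + dist c y := dist_triangle x c y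
          have h4 : dist c y = dist y c := dist_comm c y
          linarith
        have hlt := huc x y hd t0 ⟨ht0.1, hle⟩
        have hdd : dDelta dist ψ δ (ψ t0 x) (ψ t0 y) ≤
            dist (ψ 0 (ψ t0 x)) (ψ 0 (ψ t0 y)) := dDelta_le' hδ _ _ le_rfl hδ
        rw [hpsi0, hpsi0, h1, h2] at hdd
        rw [h1, h2] at hwit
        linarith
      have hshiftx : ψ t0 x = ψ (t0 - ξ) (φ ξ x) := by
        have h := psi_shift' hadd hξ
          (fun t a b => no_return_collar' hadd hξ hflow hxcol a b)
          (hcol_tau x hxcol) hψ htop (t := t0 - ξ) (by linarith)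
        rwa [sub_add_cancel] at h
      have hshifty : ψ t0 y = ψ (t0 - ξ) (φ ξ y) := by
        have h := psi_shift' hadd hξ
          (fun t a b => no_return_collar' hadd hξ hflow hycol a b)
          (hcol_tau y hycol) hψ htop (t := t0 - ξ) (by linarith)
        rwa [sub_add_cancel] at h
      refine ⟨t0 - ξ, by linarith, by linarith [ht0.2], ?_⟩
      rw [hshiftx, hshifty] at hwit
      exact hwit
    have hinj : Set.InjOn (fun p => φ ξ p) A := by
      intro x hx y hy heq
      by_contra hne
      obtain ⟨t', h0, hT, hge⟩ := key x hx y hy (Ne.symm hne)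
      simp only at heq
      rw [heq, dDelta_self' hδ] at hge
      linarith
    have himg_sep : sepHat dist ψ T ε δ ((fun p => φ ξ p) '' A) := by
      rintro x' ⟨x, hx, rfl⟩
      apply Set.Subset.antisymm
      · rintro y' ⟨⟨y, hy, rfl⟩, hball⟩
        rw [Set.mem_singleton_iff]
        by_contra hne'
        have hxy : y ≠ x := by
          intro h; apply hne'; rw [h]
        obtain ⟨t', h0, hT, hge⟩ := key x hx y hy hxy
        have := hball t' ⟨h0, hT⟩
        linarith
      · intro y' hy'
        rw [Set.mem_singleton_iff] at hy'
        subst hy'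
        exact ⟨⟨x, hx, rfl⟩, mem_ballHat_self' hε hδ _⟩
    have himg_sub : (fun p => φ ξ p) '' A ⊆ Xtube φ D ξ := by
      rintro _ ⟨x, hx, rfl⟩
      exact phi_xi_mem_Xtube' hadd hξ hflow hcont hopen hx.1.2
    calc A.encard = ((fun p => φ ξ p) '' A).encard := (hinj.encard_image).symm
      _ ≤ sHat dist ψ (Xtube φ D ξ) T ε δ := encard_le_sHat' himg_sub himg_sep
  -- covering decomposition
  have hsubE : E ⊆ (E ∩ Xtube φ D ξ) ∪
      ⋃ c ∈ F, ((E ∩ (D ∪ tube φ D ξ)) ∩ Metric.ball c (ε₁ / 2)) := by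
    intro p hp
    by_cases hpS : p ∈ Xtube φ D ξ
    · exact Or.inl ⟨hp, hpS⟩
    · have hpcol : p ∈ D ∪ tube φ D ξ := by
        by_contra h
        exact hpS h
      obtain ⟨c, hcF, hcball⟩ := Set.mem_iUnion₂.mp (hCcov (Set.mem_univ p))
      right
      refine Set.mem_iUnion₂.mpr ⟨c, ?_, ⟨⟨hp, hpcol⟩, hcball⟩⟩
      rw [hF, Set.Finite.mem_toFinset]
      exact hcF
  calc E.encard
      ≤ ((E ∩ Xtube φ D ξ) ∪
        ⋃ c ∈ F, ((E ∩ (D ∪ tube φ D ξ)) ∩ Metric.ball c (ε₁ / 2))).encard :=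
        Set.encard_mono hsubE
    _ ≤ (E ∩ Xtube φ D ξ).encard +
        (⋃ c ∈ F, ((E ∩ (D ∪ tube φ D ξ)) ∩ Metric.ball c (ε₁ / 2))).encard :=
        Set.encard_union_le _ _
    _ ≤ sHat dist ψ (Xtube φ D ξ) T ε δ +
        ∑ c ∈ F, ((E ∩ (D ∪ tube φ D ξ)) ∩ Metric.ball c (ε₁ / 2)).encard := by
        apply add_le_add
        · exact encard_le_sHat' Set.inter_subset_right
            (sepHat_subset' hEsep Set.inter_subset_left)
        · exact encard_biUnion_le' F _
    _ ≤ sHat dist ψ (Xtube φ D ξ) T ε δ +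
        ∑ _c ∈ F, sHat dist ψ (Xtube φ D ξ) T ε δ := by
        apply add_le_add_right
        exact Finset.sum_le_sum (fun c _ => hpiece c)
    _ = ((F.card + 1 : ℕ) : ℕ∞) * sHat dist ψ (Xtube φ D ξ) T ε δ := by
        rw [Finset.sum_const, nsmul_eq_mul]
        push_cast
        ring

end Stmt17Main

/-- For the impulsive semiflow `ψ` of a regular impulsive dynamical system,
the modified separated-set entropy of `ψ` on `X` equals that of its restriction to the
forward-invariant set `X_ξ`. -/
theorem stmt17 {X : Type*} [MetricSpace X] [CompactSpace X]
    (φ : ℝ → X → X) (D : Set X) (I : X → X) (ψ : ℝ → X → X) (η ξ : ℝ)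
    (hreg : IsRegularIDS φ D I η ξ) (hψ : IsImpulsive φ D I ψ) :
    hHatS dist ψ Set.univ = hHatS dist ψ (Xtube φ D ξ) := by
  obtain ⟨⟨⟨hφ0, hadd⟩, hcont, hDcl, hDne, hIcont, htaupos, htop⟩,
    hID, hLip, hξ, hξη, hopen, hflow, hIDcond⟩ := hreg
  refine le_antisymm ?_ (hHatS_mono_S' dist ψ (Set.subset_univ _))
  refine iSup_le fun δ => iSup_le fun hδ => iSup_le fun ε => iSup_le fun hε => ?_
  obtain ⟨M, hM1, hMb⟩ := stmt17_main_count φ D I ψ ξ hφ0 hadd hcont hDcl htaupos htop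
    hξ hopen hflow hψ hε hδ
  refine le_trans (rate_mul_const_le' M hM1 hMb) ?_
  exact le_iSup_of_le δ (le_iSup_of_le hδ (le_iSup_of_le ε (le_iSup_of_le hε le_rfl)))
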